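/- arXiv:1411.6712 — 8 statements merged into one kernel-verified Lean document; each statement's English description precedes it below -/
import Mathlib

section
/- Let F be a subfield of the real numbers and p a prime such that √p ∉ F. Then for any univariate polynomial q(x) with coefficients in F, the multiplicity of √p as a root of q equals the multiplicity of -√p as a root of q. -/
/-!
Since `√p ∉ F`, the minimal polynomial of `√p` over `F` is `X ^ 2 - p`, so `-√p` is a conjugate
of `√p`. Both are images of the root of `AdjoinRoot (X ^ 2 - p)` under `F`-embeddings into `ℝ`,
and an injective ring map preserves root multiplicities.
-/

open Polynomial

section ConjugateRoots

variable {K A L : Type*} [Field K] [Field A] [CommRing L] [IsDomain L] [Algebra K A] [Algebra K L]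

theorem rootMultiplicity_map_algebraMap_algHom (φ : A →ₐ[K] L) (a : A) (q : K[X]) :
    (q.map (algebraMap K L)).rootMultiplicity (φ a) =
      (q.map (algebraMap K A)).rootMultiplicity a := by
  rw [eq_rootMultiplicity_map (f := (φ : A →+* L)) φ.toRingHom.injective a, map_map,
    φ.comp_algebraMap]
  rfl

theorem rootMultiplicity_map_algebraMap_eq_of_aeval_minpoly {s t : L} (hs : IsIntegral K s)
    (ht : aeval t (minpoly K s) = 0) (q : K[X]) :
    (q.map (algebraMap K L)).rootMultiplicity s = (q.map (algebraMap K L)).rootMultiplicity t := by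
  have : Fact (Irreducible (minpoly K s)) := ⟨minpoly.irreducible hs⟩
  have hconj (u : L) (hu : aeval u (minpoly K s) = 0) :
      (q.map (algebraMap K L)).rootMultiplicity u =
        (q.map (algebraMap K (AdjoinRoot (minpoly K s)))).rootMultiplicity (AdjoinRoot.root _) := by
    let φ := AdjoinRoot.liftAlgHom _ (Algebra.ofId K L) u hu
    have hφ : φ (AdjoinRoot.root _) = u := AdjoinRoot.liftAlgHom_root _ _ _ _
    rw [← hφ]
    exact rootMultiplicity_map_algebraMap_algHom φ _ q
  rw [hconj s (minpoly.aeval K s), hconj t ht]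

end ConjugateRoots

theorem minpoly_eq_X_sq_sub_C_of_sq_eq {K L : Type*} [Field K] [Ring L] [Nontrivial L]
    [Algebra K L] {s : L} {c : K} (hsq : s ^ 2 = algebraMap K L c) (hs : s ∉ (algebraMap K L).range) :
    minpoly K s = X ^ 2 - C c := by
  have hmonic : (X ^ 2 - C c).Monic := monic_X_pow_sub_C c two_ne_zero
  have hroot : aeval s (X ^ 2 - C c) = 0 := by simp [hsq]
  have hint : IsIntegral K s := ⟨_, hmonic, by rwa [← aeval_def]⟩
  refine (eq_of_monic_of_dvd_of_natDegree_le (minpoly.monic hint) hmonic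
    (minpoly.dvd K s hroot) ?_).symm
  rw [natDegree_X_pow_sub_C]
  exact (minpoly.two_le_natDegree_iff hint).mpr hs

theorem sqrt_multiplicity_eq_general (F : Subfield ℝ) (p : ℕ)
    (hF : Real.sqrt p ∉ F) (q : Polynomial F) :
    Polynomial.rootMultiplicity (Real.sqrt p) (q.map (algebraMap F ℝ)) =
      Polynomial.rootMultiplicity (-Real.sqrt p) (q.map (algebraMap F ℝ)) := by
  have hsq : Real.sqrt p ^ 2 = algebraMap F ℝ (p : F) := by simp
  have hminpoly := minpoly_eq_X_sq_sub_C_of_sq_eq hsq fun ⟨y, hy⟩ ↦ hF (hy ▸ y.2)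
  have hint : IsIntegral F (Real.sqrt p) := .of_pow two_pos (hsq ▸ isIntegral_algebraMap)
  refine rootMultiplicity_map_algebraMap_eq_of_aeval_minpoly hint ?_ q
  simp [hminpoly]

theorem sqrt_multiplicity_eq (F : Subfield ℝ) (p : ℕ) (hp : p.Prime)
    (hF : Real.sqrt p ∉ F) (q : Polynomial F) (hq : q ≠ 0) :
    Polynomial.rootMultiplicity (Real.sqrt p) (q.map (algebraMap F ℝ)) =
      Polynomial.rootMultiplicity (-Real.sqrt p) (q.map (algebraMap F ℝ)) :=
  sqrt_multiplicity_eq_general F p hF q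
end

section
/- Let F be a subfield of the real numbers and p a prime such that √p ∉ F. Let A be an N-by-N matrix with entries in F. Then rank(√p·I + A) ≥ ⌈N/2⌉. -/
/-!
The kernel of `√p • 1 + A` is the `-√p`-eigenspace of `A`, so its dimension is at most the
multiplicity `m` of `-√p` as a root of the characteristic polynomial `χ` of `A`. Since `χ` has
coefficients in `F` and `-√p` has minimal polynomial `X ^ 2 - p` over `F`, the conjugate `√p` is a
root of `χ` and of all its derivatives wherever `-√p` is, so it has multiplicity at least `m` as
well. Hence `2 m ≤ deg χ = N`, and rank–nullity gives `rank ≥ N - ⌊N / 2⌋`.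
-/

open Polynomial Module

theorem Multiset.count_add_count_le_card {α : Type*} [DecidableEq α] {a b : α} (hab : a ≠ b)
    (s : Multiset α) : s.count a + s.count b ≤ Multiset.card s := by
  calc s.count a + s.count b
      = Multiset.card (Multiset.replicate (s.count a) a + Multiset.replicate (s.count b) b) := by
        simp
    _ ≤ Multiset.card s := by
      refine Multiset.card_le_card (Multiset.le_iff_count.2 fun c => ?_)
      simp only [Multiset.count_add, Multiset.count_replicate]
      split_ifs <;> simp_all

section Conjugates

variable {K L : Type*} [Field K] [Field L] [Algebra K L]

theorem minpoly.eq_X_sq_sub_C_of_sq_eq {x : L} {a : K} (hx : x ^ 2 = algebraMap K L a)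
    (hxK : x ∉ Set.range (algebraMap K L)) : minpoly K x = X ^ 2 - C a := by
  have hirr : Irreducible (X ^ 2 - C a) := by
    refine X_pow_sub_C_irreducible_of_prime Nat.prime_two fun b hb => hxK ?_
    have hb' := congrArg (algebraMap K L) hb
    rw [map_pow] at hb'
    have : (x - algebraMap K L b) * (x + algebraMap K L b) = 0 := by
      linear_combination hx - hb'
    rcases mul_eq_zero.1 this with h | h
    · exact ⟨b, (sub_eq_zero.1 h).symm⟩
    · exact ⟨-b, by rw [map_neg, eq_neg_of_add_eq_zero_left h]⟩
  refine (minpoly.eq_of_irreducible_of_monic hirr ?_ (monic_X_pow_sub_C a two_ne_zero)).symm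
  simp [hx]

theorem Polynomial.rootMultiplicity_map_le_of_aeval_minpoly_eq_zero [CharZero L] {x y : L}
    (hy : aeval y (minpoly K x) = 0) (q : K[X]) :
    (q.map (algebraMap K L)).rootMultiplicity x ≤ (q.map (algebraMap K L)).rootMultiplicity y := by
  rcases eq_or_ne q 0 with rfl | hq
  · simp
  refine le_of_forall_lt fun n hn => ?_
  rw [lt_rootMultiplicity_iff_isRoot_iterate_derivative (Polynomial.map_ne_zero hq)] at hn ⊢
  intro k hk
  have hx := hn k hk
  rw [iterate_derivative_map, IsRoot, eval_map_algebraMap] at hx ⊢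
  exact aeval_eq_zero_of_dvd_aeval_eq_zero (minpoly.dvd K x hx) hy

theorem Polynomial.two_mul_rootMultiplicity_map_le_natDegree [CharZero L] {x y : L} (hxy : x ≠ y)
    (hy : aeval y (minpoly K x) = 0) (q : K[X]) :
    2 * (q.map (algebraMap K L)).rootMultiplicity x ≤ q.natDegree := by
  classical
  calc 2 * (q.map (algebraMap K L)).rootMultiplicity x
      ≤ (q.map (algebraMap K L)).rootMultiplicity x
        + (q.map (algebraMap K L)).rootMultiplicity y := by
        have := rootMultiplicity_map_le_of_aeval_minpoly_eq_zero hy q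
        omega
    _ = (q.map (algebraMap K L)).roots.count x + (q.map (algebraMap K L)).roots.count y := by
        rw [count_roots, count_roots]
    _ ≤ Multiset.card (q.map (algebraMap K L)).roots := Multiset.count_add_count_le_card hxy _
    _ ≤ q.natDegree := card_roots_map_le_natDegree q

end Conjugates

theorem Matrix.finrank_ker_smul_one_add_le {K n : Type*} [Field K] [Fintype n] [DecidableEq n]
    (c : K) (A : Matrix n n K) :
    finrank K (LinearMap.ker (c • 1 + A).mulVecLin) ≤ A.charpoly.rootMultiplicity (-c) := by
  have hker : LinearMap.ker (c • 1 + A).mulVecLin = Module.End.eigenspace A.toLin' (-c) := by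
    ext v
    rw [LinearMap.mem_ker, Module.End.mem_eigenspace_iff, Matrix.mulVecLin_apply,
      Matrix.toLin'_apply, Matrix.add_mulVec, Matrix.smul_mulVec, Matrix.one_mulVec, neg_smul,
      eq_neg_iff_add_eq_zero, add_comm]
  rw [hker, ← Matrix.charpoly_toLin']
  exact LinearMap.finrank_eigenspace_le _ _

theorem Matrix.rank_add_finrank_ker {K n : Type*} [Field K] [Fintype n]
    (A : Matrix n n K) : A.rank + finrank K (LinearMap.ker A.mulVecLin) = Fintype.card n := by
  rw [Matrix.rank, LinearMap.finrank_range_add_finrank_ker, Module.finrank_fintype_fun_eq_card]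

theorem rank_sqrt_id_add_general (F : Subfield ℝ) (p : ℕ)
    (hF : Real.sqrt p ∉ F) (N : ℕ) (A : Matrix (Fin N) (Fin N) ℝ)
    (hA : ∀ i j, A i j ∈ F) :
    (N + 1) / 2 ≤ (Real.sqrt p • (1 : Matrix (Fin N) (Fin N) ℝ) + A).rank := by
  have hker := Matrix.finrank_ker_smul_one_add_le (Real.sqrt p) A
  have hrank := Matrix.rank_add_finrank_ker (Real.sqrt p • 1 + A)
  rw [Fintype.card_fin] at hrank
  set x := -Real.sqrt p
  have hsq : x ^ 2 = algebraMap F ℝ p := by simp [x]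
  have hxF : x ∉ Set.range (algebraMap F ℝ) := fun ⟨b, hb⟩ => hF <| by
    have hb' : (b : ℝ) = -Real.sqrt p := hb
    simpa [hb'] using (-b).2
  have hconj : aeval (-x) (minpoly F x) = 0 := by
    simp [minpoly.eq_X_sq_sub_C_of_sq_eq hsq hxF, hsq]
  have hx : x ≠ -x := fun h => hF <| by
    rw [show Real.sqrt p = 0 by simp only [x] at h; linarith]
    exact F.zero_mem
  let A₀ : Matrix (Fin N) (Fin N) F := fun i j => ⟨A i j, hA i j⟩
  have hmult := two_mul_rootMultiplicity_map_le_natDegree hx hconj A₀.charpoly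
  rw [← Matrix.charpoly_map, Matrix.charpoly_natDegree_eq_dim, Fintype.card_fin] at hmult
  change 2 * (A.charpoly.rootMultiplicity x) ≤ N at hmult
  omega

theorem rank_sqrt_id_add (F : Subfield ℝ) (p : ℕ) (hp : p.Prime)
    (hF : Real.sqrt p ∉ F) (N : ℕ) (A : Matrix (Fin N) (Fin N) ℝ)
    (hA : ∀ i j, A i j ∈ F) :
    (N + 1) / 2 ≤ (Real.sqrt p • (1 : Matrix (Fin N) (Fin N) ℝ) + A).rank :=
  rank_sqrt_id_add_general F p hF N A hA
end

section
/- Let F be a subfield of the real numbers and p a prime with √p ∉ F, and let A be an N-by-N matrix with entries in F. Then the eigenvalue -√p of A (viewed over ℝ) has algebraic multiplicity at most ⌊N/2⌋ as a root of the characteristic polynomial of A. -/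
/-!
Since `√p ∉ F`, the minimal polynomial of `-√p` over `F` has degree at least `2`, and it is
separable. Each occurrence of `-√p` as a root of the characteristic polynomial (which has
coefficients in `F`) therefore accounts for a whole factor of the minimal polynomial, so the
multiplicity `m` satisfies `2 m ≤ N`.
-/

open Polynomial

section Separable

variable {K L : Type*} [Field K] [Field L] [Algebra K L] {x : L}

theorem minpoly_pow_dvd_of_le_rootMultiplicity (hx : IsSeparable K x) (m : ℕ) {q : K[X]}
    (hq : q ≠ 0) (hm : m ≤ rootMultiplicity x (q.map (algebraMap K L))) :
    minpoly K x ^ m ∣ q := by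
  induction m generalizing q with
  | zero => simp
  | succ m ih =>
    have hroot : aeval x q = 0 := by
      rw [aeval_def, ← eval_map]
      exact (rootMultiplicity_pos (map_ne_zero hq)).mp (by omega)
    obtain ⟨r, rfl⟩ := minpoly.dvd K x hroot
    have hr : r ≠ 0 := right_ne_zero_of_mul hq
    have hne := Polynomial.map_ne_zero (f := algebraMap K L) hq
    rw [Polynomial.map_mul] at hm hne
    have hmul := rootMultiplicity_mul (x := x) hne
    -- `x` is a simple root of its minimal polynomial, so dividing it off costs one multiplicity
    have hone := rootMultiplicity_le_one_of_separable
      (Separable.map (f := algebraMap K L) hx) x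
    rw [pow_succ']
    exact mul_dvd_mul_left _ (ih hr (by omega))

theorem rootMultiplicity_mul_natDegree_minpoly_le (hx : IsSeparable K x) (q : K[X]) :
    rootMultiplicity x (q.map (algebraMap K L)) * (minpoly K x).natDegree ≤ q.natDegree := by
  rcases eq_or_ne q 0 with rfl | hq
  · simp
  rw [← natDegree_pow]
  exact natDegree_le_of_dvd (minpoly_pow_dvd_of_le_rootMultiplicity hx _ hq le_rfl) hq

end Separable

theorem Subfield.isIntegral_sqrt {F : Subfield ℝ} {r : ℝ} (hr : r ∈ F) (hr0 : 0 ≤ r) :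
    IsIntegral F √r := by
  refine ⟨X ^ 2 - C ⟨r, hr⟩, monic_X_pow_sub_C _ two_ne_zero, ?_⟩
  simp only [eval₂_sub, eval₂_X_pow, eval₂_C, Real.sq_sqrt hr0]
  exact sub_eq_zero.mpr rfl

theorem Subfield.two_le_natDegree_minpoly_neg_sqrt {F : Subfield ℝ} {r : ℝ} (hr : r ∈ F)
    (hr0 : 0 ≤ r) (hF : √r ∉ F) : 2 ≤ (minpoly F (-√r)).natDegree := by
  refine (minpoly.two_le_natDegree_iff (isIntegral_sqrt hr hr0).neg).mpr ?_
  rintro ⟨y, hy⟩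
  have : √r = ((-y : F) : ℝ) := by
    rw [Subfield.coe_neg, ← neg_neg √r, ← hy]
    rfl
  exact hF (this ▸ (-y).2)

theorem charpoly_mult_le_general (F : Subfield ℝ) (p : ℕ)
    (hF : Real.sqrt p ∉ F) (N : ℕ) (A : Matrix (Fin N) (Fin N) ℝ)
    (hA : ∀ i j, A i j ∈ F) :
    Polynomial.rootMultiplicity (-Real.sqrt p) (Matrix.charpoly A) ≤ N / 2 := by
  have hp : (p : ℝ) ∈ F := natCast_mem F p
  have hsep : IsSeparable F (-√p) :=
    (minpoly.irreducible (Subfield.isIntegral_sqrt hp p.cast_nonneg).neg).separable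
  obtain ⟨B, rfl⟩ : ∃ B : Matrix (Fin N) (Fin N) F, B.map (algebraMap F ℝ) = A :=
    ⟨fun i j => ⟨A i j, hA i j⟩, rfl⟩
  have hbound := rootMultiplicity_mul_natDegree_minpoly_le hsep B.charpoly
  rw [← Matrix.charpoly_map, Matrix.charpoly_natDegree_eq_dim, Fintype.card_fin] at hbound
  rw [Nat.le_div_iff_mul_le two_pos]
  exact (Nat.mul_le_mul_left _
    (Subfield.two_le_natDegree_minpoly_neg_sqrt hp p.cast_nonneg hF)).trans hbound

theorem charpoly_mult_le (F : Subfield ℝ) (p : ℕ) (hp : p.Prime)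
    (hF : Real.sqrt p ∉ F) (N : ℕ) (A : Matrix (Fin N) (Fin N) ℝ)
    (hA : ∀ i j, A i j ∈ F) :
    Polynomial.rootMultiplicity (-Real.sqrt p) (Matrix.charpoly A) ≤ N / 2 :=
  charpoly_mult_le_general F p hF N A hA
end

section
/- For any nonnegative m-by-n real matrix A, the positive semidefinite rank of A is at least the square root of the ordinary rank of A: prank(A) ≥ √(rank(A)). -/
/-! A trace factorization `A i j = Tr (E i * F j)` of size `r` writes `A` as the product of an
`m × r²` and an `r² × n` matrix, so `rank A ≤ r²` even without positivity. Conversely a nonnegative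
matrix has the diagonal PSD factorization `E i = diag (A i)`, `F j = diag (e j)`, so the infimum
defining `psdRank` is attained. -/

noncomputable def psdRank {m n : ℕ} (A : Matrix (Fin m) (Fin n) ℝ) : ℕ :=
  sInf {r : ℕ | ∃ (E : Fin m → Matrix (Fin r) (Fin r) ℝ) (F : Fin n → Matrix (Fin r) (Fin r) ℝ),
    (∀ i, (E i).PosSemidef) ∧ (∀ j, (F j).PosSemidef) ∧
    ∀ i j, A i j = ((E i) * (F j)).trace}

namespace Matrix

variable {R : Type*} [CommSemiring R] [StrongRankCondition R]

theorem rank_le_card_sq_of_eq_trace_mul {m n r : Type*} [Fintype n] [Fintype r]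
    (A : Matrix m n R) (E : m → Matrix r r R) (F : n → Matrix r r R)
    (h : ∀ i j, A i j = (E i * F j).trace) : A.rank ≤ Fintype.card r ^ 2 := by
  let B : Matrix m (r × r) R := of fun i p => E i p.1 p.2
  let C : Matrix (r × r) n R := of fun p j => F j p.2 p.1
  have hBC : A = B * C := by
    ext i j
    simp only [h, trace, diag, mul_apply, B, C, of_apply, ← Finset.sum_product',
      Finset.univ_product_univ]
  calc A.rank ≤ B.rank := hBC ▸ rank_mul_le_left B C
    _ ≤ Fintype.card (r × r) := rank_le_card_width B
    _ = Fintype.card r ^ 2 := by rw [Fintype.card_prod, sq]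

end Matrix

open Matrix

def HasPSDFactorization {m n : ℕ} (A : Matrix (Fin m) (Fin n) ℝ) (r : ℕ) : Prop :=
  ∃ (E : Fin m → Matrix (Fin r) (Fin r) ℝ) (F : Fin n → Matrix (Fin r) (Fin r) ℝ),
    (∀ i, (E i).PosSemidef) ∧ (∀ j, (F j).PosSemidef) ∧ ∀ i j, A i j = ((E i) * (F j)).trace

theorem HasPSDFactorization.rank_le_sq {m n r : ℕ} {A : Matrix (Fin m) (Fin n) ℝ}
    (h : HasPSDFactorization A r) : A.rank ≤ r ^ 2 := by
  obtain ⟨E, F, -, -, hEF⟩ := h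
  simpa using A.rank_le_card_sq_of_eq_trace_mul E F hEF

theorem hasPSDFactorization_width_of_nonneg {m n : ℕ} {A : Matrix (Fin m) (Fin n) ℝ}
    (hA : ∀ i j, 0 ≤ A i j) : HasPSDFactorization A n := by
  refine ⟨fun i => diagonal (A i), fun j => diagonal (Pi.single j 1), fun i => ?_, fun j => ?_,
    fun i j => ?_⟩
  · exact posSemidef_diagonal_iff.mpr (hA i)
  · exact posSemidef_diagonal_iff.mpr fun k => by by_cases hk : k = j <;> simp [hk]
  · simp [diagonal_mul_diagonal, trace_diagonal, Pi.single_apply]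

theorem hasPSDFactorization_psdRank {m n : ℕ} {A : Matrix (Fin m) (Fin n) ℝ}
    (hA : ∀ i j, 0 ≤ A i j) : HasPSDFactorization A (psdRank A) :=
  Nat.sInf_mem (s := {r | HasPSDFactorization A r}) ⟨n, hasPSDFactorization_width_of_nonneg hA⟩

theorem psdRank_ge_sqrt_rank {m n : ℕ} (A : Matrix (Fin m) (Fin n) ℝ)
    (hA : ∀ i j, 0 ≤ A i j) :
    Real.sqrt (A.rank) ≤ (psdRank A : ℝ) := by
  have hrank : A.rank ≤ psdRank A ^ 2 := (hasPSDFactorization_psdRank hA).rank_le_sq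
  exact Real.sqrt_le_iff.mpr ⟨by positivity, by exact_mod_cast hrank⟩
end

section
/- For any nonnegative matrix A, the positive semidefinite rank is at most the square root rank: prank(A) ≤ rank_√(A). -/
noncomputable def sqrtRank {m n : ℕ} (A : Matrix (Fin m) (Fin n) ℝ) : ℕ :=
  sInf {r : ℕ | ∃ B : Matrix (Fin m) (Fin n) ℝ, (∀ i j, A i j = B i j * B i j) ∧ B.rank = r}

/-
Factor `B = U * V` through `Fin B.rank`, with rows `u i` of `U` and columns `v j` of `V`. Then
`A i j = (u i ⬝ᵥ v j) ^ 2 = tr ((u i u iᵀ) (v j v jᵀ))`, a PSD factorization by rank-one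
matrices of size `B.rank`.
-/

namespace Matrix

theorem exists_rank_factorization {m n K : Type*} [Fintype n] [Field K] (B : Matrix m n K) :
    ∃ (U : Matrix m (Fin B.rank) K) (V : Matrix (Fin B.rank) n K), U * V = B := by
  classical
  let b := Module.finBasisOfFinrankEq K (LinearMap.range B.mulVecLin) rfl
  have hcol (j : n) : B.col j ∈ LinearMap.range B.mulVecLin :=
    ⟨Pi.single j 1, mulVec_single_one B j⟩
  refine ⟨of fun i k => (b k : m → K) i, of fun k j => b.repr ⟨B.col j, hcol j⟩ k, ?_⟩
  ext i j
  have hsum := congrArg (fun w : LinearMap.range B.mulVecLin => (w : m → K) i)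
    (b.sum_repr ⟨B.col j, hcol j⟩)
  simp only [Submodule.coe_sum, Submodule.coe_smul, Finset.sum_apply, Pi.smul_apply,
    smul_eq_mul, col_apply] at hsum
  rw [← hsum, mul_apply]
  exact Finset.sum_congr rfl fun k _ => mul_comm _ _

theorem trace_vecMulVec_self_mul_vecMulVec_self {n R : Type*} [Fintype n] [CommSemiring R]
    (a b : n → R) : (vecMulVec a a * vecMulVec b b).trace = (a ⬝ᵥ b) * (a ⬝ᵥ b) := by
  rw [vecMulVec_mul_vecMulVec, trace_vecMulVec, dotProduct_smul, smul_eq_mul]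

theorem posSemidef_vecMulVec_self {n R : Type*} [Finite n] [CommRing R] [PartialOrder R]
    [StarRing R] [TrivialStar R] [StarOrderedRing R] (a : n → R) :
    (vecMulVec a a).PosSemidef := by
  simpa using posSemidef_vecMulVec_self_star a

end Matrix

open Matrix

theorem psdRank_le_rank_of_forall_eq_mul_self {m n : ℕ} {A B : Matrix (Fin m) (Fin n) ℝ}
    (hAB : ∀ i j, A i j = B i j * B i j) : psdRank A ≤ B.rank := by
  obtain ⟨U, V, hUV⟩ := B.exists_rank_factorization
  refine Nat.sInf_le ⟨fun i => vecMulVec (U i) (U i), fun j => vecMulVec (Vᵀ j) (Vᵀ j),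
    fun i => posSemidef_vecMulVec_self _, fun j => posSemidef_vecMulVec_self _, fun i j => ?_⟩
  rw [trace_vecMulVec_self_mul_vecMulVec_self, hAB, ← congrFun₂ hUV i j, mul_apply']
  rfl

theorem exists_rank_eq_sqrtRank {m n : ℕ} {A : Matrix (Fin m) (Fin n) ℝ}
    (hA : ∀ i j, 0 ≤ A i j) :
    ∃ B : Matrix (Fin m) (Fin n) ℝ, (∀ i j, A i j = B i j * B i j) ∧ B.rank = sqrtRank A := by
  have hne : {r | ∃ B : Matrix (Fin m) (Fin n) ℝ,
      (∀ i j, A i j = B i j * B i j) ∧ B.rank = r}.Nonempty :=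
    ⟨_, of fun i j => √(A i j), fun i j => (Real.mul_self_sqrt (hA i j)).symm, rfl⟩
  exact Nat.sInf_mem hne

theorem psdRank_le_sqrtRank {m n : ℕ} (A : Matrix (Fin m) (Fin n) ℝ)
    (hA : ∀ i j, 0 ≤ A i j) :
    psdRank A ≤ sqrtRank A := by
  obtain ⟨B, hAB, hB⟩ := exists_rank_eq_sqrtRank hA
  exact hB ▸ psdRank_le_rank_of_forall_eq_mul_self hAB
end

section
/- For x, y ∈ {0,1}^n, the quantity (xᵀy - 1)(xᵀy - 2) equals Tr((xxᵀ - 3·diag(x))·yyᵀ) + 2 and is nonnegative; hence the matrix M_n(x,y) = (xᵀy - 1)(xᵀy - 2) is a submatrix of the slack matrix of the correlation polytope COR_n. -/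
/-!
With `s = xᵀy`, the trace splits as `Tr(xxᵀ yyᵀ) = s²` and `Tr(diag(x) yyᵀ) = Σ xᵢ yᵢ² = s`,
the latter because `y` is idempotent entrywise; so the slack is `s² - 3s + 2 = (s - 1)(s - 2)`.
For 0/1 vectors `s` is a natural number, and no natural number lies strictly between 1 and 2.
-/

open Matrix

namespace Matrix

variable {n R : Type*} [Fintype n]

theorem trace_mul_vecMulVec [CommSemiring R] (M : Matrix n n R) (u v : n → R) :
    trace (M * vecMulVec u v) = M *ᵥ u ⬝ᵥ v := by
  rw [mul_vecMulVec, trace_vecMulVec]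

theorem trace_sub_smul_diagonal_mul_vecMulVec [CommRing R] [DecidableEq n] (c : R)
    (x : n → R) {y : n → R} (hy : IsIdempotentElem y) :
    trace ((vecMulVec x x - c • diagonal x) * vecMulVec y y) =
      (x ⬝ᵥ y) ^ 2 - c * (x ⬝ᵥ y) := by
  have hdiag : diagonal x *ᵥ y ⬝ᵥ y = x ⬝ᵥ y := by
    conv_rhs => rw [← hy.eq]
    simp only [dotProduct, mulVec_diagonal, Pi.mul_apply, mul_assoc]
  rw [trace_mul_vecMulVec, sub_mulVec, smul_mulVec, sub_dotProduct, smul_dotProduct, hdiag,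
    vecMulVec_mulVec, op_smul_eq_smul, smul_dotProduct, smul_eq_mul, smul_eq_mul, sq]

theorem dotProduct_mem_rangeS_natCast [NonAssocSemiring R] {x y : n → R}
    (hx : ∀ i, x i = 0 ∨ x i = 1) (hy : ∀ i, y i = 0 ∨ y i = 1) :
    x ⬝ᵥ y ∈ (Nat.castRingHom R).rangeS := by
  have hbin : ∀ r : R, r = 0 ∨ r = 1 → r ∈ (Nat.castRingHom R).rangeS := by
    rintro r (rfl | rfl)
    exacts [zero_mem _, one_mem _]
  exact sum_mem fun i _ => mul_mem (hbin _ (hx i)) (hbin _ (hy i))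

end Matrix

theorem natCast_sub_one_mul_sub_two_nonneg {R : Type*} [CommRing R] [LinearOrder R]
    [IsStrictOrderedRing R] (m : ℕ) : 0 ≤ ((m : R) - 1) * (m - 2) := by
  obtain _ | _ | m := m
  · norm_num
  · norm_num
  · push_cast
    ring_nf
    positivity

theorem slack_identity (n : ℕ) (x y : Fin n → ℝ)
    (hx : ∀ i, x i = 0 ∨ x i = 1) (hy : ∀ i, y i = 0 ∨ y i = 1) :
    ((∑ i, x i * y i) - 1) * ((∑ i, x i * y i) - 2) =
      Matrix.trace ((Matrix.vecMulVec x x - (3 : ℝ) • Matrix.diagonal x) *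
        Matrix.vecMulVec y y) + 2 ∧
    0 ≤ ((∑ i, x i * y i) - 1) * ((∑ i, x i * y i) - 2) := by
  rw [← dotProduct]
  have hy_idem : IsIdempotentElem y :=
    funext fun i => IsIdempotentElem.iff_eq_zero_or_one.mpr (hy i)
  obtain ⟨m, hm⟩ := dotProduct_mem_rangeS_natCast hx hy
  refine ⟨?_, ?_⟩
  · rw [trace_sub_smul_diagonal_mul_vecMulVec 3 x hy_idem]
    ring
  · rw [← hm]
    exact natCast_sub_one_mul_sub_two_nonneg m
end

section
/- Let p be a prime and let p_1, ..., p_t be all primes strictly less than p. Then √p does not belong to the field ℚ(√p_1, ..., √p_t). -/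
/-!
Induct on a finite set `P` of pairwise coprime squarefree numbers, proving more generally that
`√n ∉ ℚ(√q : q ∈ P)` for every squarefree `n ≠ 1` coprime to all of `P`. Over `K = ℚ(√q : q ∈ P)`
the field `K(√q)` is `K + K √q`, so `√n = a + b √q` with `a, b ∈ K`. Squaring, `2ab √q ∈ K`; since
`√q ∉ K` by induction, `a = 0` or `b = 0`. If `b = 0` then `√n ∈ K`, and if `a = 0` then
`√(nq) = bq ∈ K`, both excluded by induction since `nq` is again squarefree and coprime to `P`.
-/

open Real

section QuadraticSubfield

variable {F : Type*} [Field F]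

/-- `K + K s`; closed under inversion as `(a + b s)⁻¹ = (a - b s) / (a² - b² s²)`. -/
def Subfield.quadratic (K : Subfield F) (s : F) (hs2 : s * s ∈ K) (hs : s ∉ K) : Subfield F where
  carrier := {x | ∃ a ∈ K, ∃ b ∈ K, x = a + b * s}
  one_mem' := ⟨1, one_mem K, 0, zero_mem K, by ring⟩
  zero_mem' := ⟨0, zero_mem K, 0, zero_mem K, by ring⟩
  add_mem' := by
    rintro _ _ ⟨a, ha, b, hb, rfl⟩ ⟨c, hc, d, hd, rfl⟩
    exact ⟨a + c, add_mem ha hc, b + d, add_mem hb hd, by ring⟩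
  mul_mem' := by
    rintro _ _ ⟨a, ha, b, hb, rfl⟩ ⟨c, hc, d, hd, rfl⟩
    exact ⟨a * c + b * d * (s * s), add_mem (mul_mem ha hc) (mul_mem (mul_mem hb hd) hs2),
      a * d + b * c, add_mem (mul_mem ha hd) (mul_mem hb hc), by ring⟩
  neg_mem' := by
    rintro _ ⟨a, ha, b, hb, rfl⟩
    exact ⟨-a, neg_mem ha, -b, neg_mem hb, by ring⟩
  inv_mem' := by
    rintro _ ⟨a, ha, b, hb, rfl⟩
    by_cases hconj : a - b * s = 0
    · have hb0 : b = 0 := by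
        by_contra hb0
        have : s = a / b := by rw [sub_eq_zero.mp hconj]; field_simp
        exact hs (this ▸ div_mem ha hb)
      obtain rfl : a = 0 := by simpa [hb0] using hconj
      exact ⟨0, zero_mem K, 0, zero_mem K, by simp [hb0]⟩
    · set N := a * a - b * b * (s * s)
      have hN : N ∈ K := sub_mem (mul_mem ha ha) (mul_mem (mul_mem hb hb) hs2)
      refine ⟨a * N⁻¹, mul_mem ha (inv_mem hN), -b * N⁻¹, mul_mem (neg_mem hb) (inv_mem hN), ?_⟩
      calc (a + b * s)⁻¹ = (a - b * s) * ((a + b * s) * (a - b * s))⁻¹ := by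
            rw [mul_inv, mul_left_comm, mul_inv_cancel₀ hconj, mul_one]
        _ = a * N⁻¹ + -b * N⁻¹ * s := by simp only [N]; ring

theorem Subfield.exists_eq_add_mul_of_mem_closure_insert {T : Set F} {s x : F}
    (hs2 : s * s ∈ Subfield.closure T) (hs : s ∉ Subfield.closure T)
    (hx : x ∈ Subfield.closure (insert s T)) :
    ∃ a ∈ Subfield.closure T, ∃ b ∈ Subfield.closure T, x = a + b * s := by
  refine (Subfield.closure_le (t := Subfield.quadratic _ s hs2 hs)).mpr
    (Set.insert_subset ?_ fun y hy => ?_) hx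
  · exact ⟨0, zero_mem _, 1, one_mem _, by ring⟩
  · exact ⟨y, Subfield.subset_closure hy, 0, zero_mem _, by ring⟩

end QuadraticSubfield

theorem irrational_sqrt_of_squarefree {n : ℕ} (hn : Squarefree n) (hn1 : n ≠ 1) :
    Irrational √n := by
  refine irrational_sqrt_natCast_iff.mpr fun ⟨k, hk⟩ => hn1 ?_
  rw [hk, Nat.isUnit_iff.mp (hn k ⟨1, by rw [hk, mul_one]⟩)]

theorem sqrt_notMem_closure_image_sqrt (P : Finset ℕ) (hsq : ∀ q ∈ P, Squarefree q) (h1 : 1 ∉ P)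
    (hcop : (P : Set ℕ).Pairwise Nat.Coprime) {n : ℕ} (hn : Squarefree n) (hn1 : n ≠ 1)
    (hnP : ∀ q ∈ P, n.Coprime q) :
    √n ∉ Subfield.closure ((fun q : ℕ => √(q : ℝ)) '' P) := by
  induction P using Finset.induction_on generalizing n with
  | empty =>
    intro hmem
    rw [Finset.coe_empty, Set.image_empty, Subfield.closure_empty] at hmem
    exact irrational_sqrt_of_squarefree hn hn1
      (RingHom.mem_fieldRange.mp (bot_le (a := (Rat.castHom ℝ).fieldRange) hmem))
  | insert q P hq_notMem ih =>
    simp only [Finset.mem_insert, forall_eq_or_imp] at hsq h1 hnP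
    rw [Finset.coe_insert, Set.pairwise_insert_of_symm_of_notMem hq_notMem] at hcop
    rw [Finset.coe_insert, Set.image_insert_eq]
    set K := Subfield.closure ((fun q : ℕ => √(q : ℝ)) '' P)
    have ih : ∀ {m : ℕ}, Squarefree m → m ≠ 1 → (∀ r ∈ P, m.Coprime r) → √(m : ℝ) ∉ K :=
      ih hsq.2 (mt Or.inr h1) hcop.1
    have hqP : ∀ r ∈ P, q.Coprime r := hcop.2
    have hqK : (q : ℝ) ∈ K := natCast_mem K q
    have hq : √(q : ℝ) * √q = q := mul_self_sqrt q.cast_nonneg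
    have hsqrt_q : √(q : ℝ) ∉ K := ih hsq.1 (fun h => h1 (Or.inl h.symm)) hqP
    intro hmem
    obtain ⟨a, ha, b, hb, hab⟩ :=
      Subfield.exists_eq_add_mul_of_mem_closure_insert (by rwa [hq]) hsqrt_q hmem
    have hsquare : 2 * a * b * √q = n - a * a - b * b * q := by
      linear_combination mul_self_sqrt n.cast_nonneg - (√n + a + b * √q) * hab - b * b * hq
    rcases eq_or_ne a 0 with rfl | ha0
    · refine ih (Nat.squarefree_mul_iff.mpr ⟨hnP.1, hn, hsq.1⟩) (by simp [hn1])
        (fun r hr => Nat.Coprime.mul_left (hnP.2 r hr) (hqP r hr)) ?_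
      rw [Nat.cast_mul, sqrt_mul n.cast_nonneg, hab, zero_add, mul_assoc, hq]
      exact mul_mem hb hqK
    rcases eq_or_ne b 0 with rfl | hb0
    · exact ih hn hn1 hnP.2 (by simpa [hab] using ha)
    · have hsqrt_q_eq : √(q : ℝ) = (n - a * a - b * b * q) / (2 * a * b) := by
        rw [← hsquare]; field_simp
      refine hsqrt_q (hsqrt_q_eq ▸ div_mem ?_ (mul_mem (mul_mem (ofNat_mem K 2) ha) hb))
      exact sub_mem (sub_mem (natCast_mem K n) (mul_mem ha ha)) (mul_mem (mul_mem hb hb) hqK)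

theorem sqrt_prime_not_in_field (p : ℕ) (hp : p.Prime) :
    Real.sqrt p ∉
      Subfield.closure {x : ℝ | ∃ q : ℕ, q.Prime ∧ q < p ∧ x = Real.sqrt q} := by
  set P := (Finset.range p).filter Nat.Prime
  have hP : ∀ q ∈ P, q.Prime ∧ q < p := by simp [P, and_comm]
  have hset : {x : ℝ | ∃ q : ℕ, q.Prime ∧ q < p ∧ x = √q} = (fun q : ℕ => √(q : ℝ)) '' P := by
    ext x
    simp only [Set.mem_ofPred_eq, Finset.coe_filter, Finset.mem_range, Set.mem_image, P]
    grind
  rw [hset]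
  refine sqrt_notMem_closure_image_sqrt P (fun q hq => (hP q hq).1.squarefree)
    (fun h1 => Nat.not_prime_one (hP 1 h1).1) ?_ hp.squarefree hp.one_lt.ne' ?_
  · exact fun q hq r hr hqr => (Nat.coprime_primes (hP q hq).1 (hP r hr).1).mpr hqr
  · exact fun q hq => (Nat.coprime_primes hp (hP q hq).1).mpr (hP q hq).2.ne'
end

section
/- Define the 2^n-by-2^n matrix F_n indexed by x, y ∈ {0,1}^n by F_n(x,y) = xᵀy(xᵀy - 1). Then the nonnegative rank of F_n is at most C(n,2) = n(n-1)/2. -/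
/-!
For 0/1 vectors with common support `T`, the entry `xᵀy (xᵀy - 1)` counts the ordered pairs
`(i, j)` of distinct elements of `T`, i.e. it is twice the number of unordered pairs `{i, j} ⊆ T`.
Hence `F_n = ∑_{i < j} 2 [xᵢ xⱼ] [yᵢ yⱼ]`, a sum of `C(n, 2)` nonnegative rank-one matrices.
-/

noncomputable def nonnegRank {α β : Type*} [Fintype α] [Fintype β]
    (A : Matrix α β ℝ) : ℕ :=
  sInf {r : ℕ | ∃ (u : Fin r → α → ℝ) (v : Fin r → β → ℝ),
    (∀ k i, 0 ≤ u k i) ∧ (∀ k j, 0 ≤ v k j) ∧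
    ∀ i j, A i j = ∑ k, u k i * v k j}

open Finset

theorem nonnegRank_le_card {α β ι : Type*} [Fintype α] [Fintype β] [Fintype ι]
    (A : Matrix α β ℝ) (u : ι → α → ℝ) (v : ι → β → ℝ)
    (hu : ∀ k i, 0 ≤ u k i) (hv : ∀ k j, 0 ≤ v k j) (hA : ∀ i j, A i j = ∑ k, u k i * v k j) :
    nonnegRank A ≤ Fintype.card ι := by
  let e := (Fintype.equivFin ι).symm
  refine Nat.sInf_le ⟨fun k => u (e k), fun k => v (e k), fun k => hu (e k),
    fun k => hv (e k), fun i j => ?_⟩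
  rw [hA, ← e.sum_comp]

theorem sum_mul_sum_sub_one_eq_sum_offDiag {ι R : Type*} [DecidableEq ι] [CommRing R]
    (s : Finset ι) (t : ι → R) (ht : ∀ i ∈ s, IsIdempotentElem (t i)) :
    (∑ i ∈ s, t i) * (∑ i ∈ s, t i - 1) = ∑ p ∈ s.offDiag, t p.1 * t p.2 := by
  rw [mul_sub, mul_one, sum_mul_sum, ← sum_product', ← diag_union_offDiag,
    sum_union (disjoint_diag_offDiag s), sum_diag, sum_congr rfl ht, add_sub_cancel_left]

theorem card_filter_offDiag_mk_eq_two {α : Type*} [DecidableEq α] {s : Finset α} {p : α × α}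
    (hp : p ∈ s.offDiag) :
    #{q ∈ s.offDiag | s(q.1, q.2) = s(p.1, p.2)} = 2 := by
  obtain ⟨a, b⟩ := p
  have hab : a ≠ b := (mem_offDiag.1 hp).2.2
  rw [← card_pair (by simp [hab] : (a, b) ≠ (b, a))]
  congr 1
  ext ⟨c, d⟩
  simp only [mem_filter, mem_offDiag, Sym2.eq_iff, mem_insert, mem_singleton, Prod.mk.injEq]
  grind

theorem sum_offDiag_sym2_eq_two_nsmul {α M : Type*} [DecidableEq α] [AddCommMonoid M]
    (s : Finset α) (g : Sym2 α → M) :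
    ∑ p ∈ s.offDiag, g s(p.1, p.2) = 2 • ∑ z ∈ s.offDiag.image Sym2.mk.uncurry, g z := by
  rw [smul_sum]
  refine (sum_image' _ fun p hp => ?_).symm
  refine Eq.trans ?_ (sum_congr rfl fun q hq => (congrArg g (mem_filter.1 hq).2).symm)
  rw [sum_const]
  exact congrArg (· • _) (card_filter_offDiag_mk_eq_two hp).symm

theorem nonnegRank_Fn_le (n : ℕ)
    (Fmat : Matrix (Fin n → Bool) (Fin n → Bool) ℝ)
    (hF : ∀ x y, Fmat x y =
      (∑ i, (if x i then (1 : ℝ) else 0) * (if y i then 1 else 0)) *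
      ((∑ i, (if x i then (1 : ℝ) else 0) * (if y i then 1 else 0)) - 1)) :
    nonnegRank Fmat ≤ n.choose 2 := by
  let S := (univ : Finset (Fin n)).offDiag.image Sym2.mk.uncurry
  let onPair (z : Sym2 (Fin n)) (x : Fin n → Bool) : ℝ := if ∀ i ∈ z, x i then 1 else 0
  have hS : Fintype.card S = n.choose 2 := by
    rw [Fintype.card_coe, Sym2.card_image_offDiag, card_univ, Fintype.card_fin]
  refine hS ▸ nonnegRank_le_card Fmat (fun z x => 2 * onPair z x) (fun z y => onPair z y)
    (fun _ _ => by positivity) (fun _ _ => by positivity) fun x y => ?_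
  set t : Fin n → ℝ := fun i => (if x i then 1 else 0) * (if y i then 1 else 0)
  calc Fmat x y = (∑ i, t i) * (∑ i, t i - 1) := hF x y
    _ = ∑ p ∈ univ.offDiag, t p.1 * t p.2 :=
      sum_mul_sum_sub_one_eq_sum_offDiag _ _ fun i _ => by
        simp only [t, IsIdempotentElem]; split_ifs <;> simp
    _ = ∑ p ∈ univ.offDiag, onPair s(p.1, p.2) x * onPair s(p.1, p.2) y :=
      sum_congr rfl fun p _ => by
        simp only [t, onPair, Sym2.mem_iff, forall_eq_or_imp, forall_eq]; split_ifs <;> simp_all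
    _ = 2 • ∑ z ∈ S, onPair z x * onPair z y :=
      sum_offDiag_sym2_eq_two_nsmul univ fun z => onPair z x * onPair z y
    _ = ∑ z : S, 2 * onPair z x * onPair z y := by
      rw [nsmul_eq_mul, Nat.cast_ofNat, mul_sum, ← sum_coe_sort]
      simp only [mul_assoc]
end
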